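/- arXiv:0808.4100 — 8 statements merged into one kernel-verified Lean document; each statement's English description precedes it below -/
import Mathlib

section
/- Let M be an n×n matrix over a commutative ring such that every row sum of M is zero (equivalently, M annihilates the column vector of all ones). Then the row vector (m_1, ..., m_n), where m_i is the i-th principal minor of M (the determinant of the submatrix obtained by deleting row i and column i), satisfies (m_1, ..., m_n) · M = 0. -/
/-!
Since `M` kills the all-ones vector, every row of `adj M` is the same: the difference of
rows `j` and `i` in column `k` is the determinant of `M` with row `k` replaced by `eⱼ - eᵢ`,
a matrix that still kills the all-ones vector and is therefore singular. Hence row `j` of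
`adj M * M = det M • 1 = 0` reads `∑ₖ adj M k k * M k j = 0`, and the diagonal entries of
`adj M` are the principal minors.
-/

namespace Matrix

variable {ι R : Type*} [Fintype ι] [DecidableEq ι] [CommRing R]

theorem det_eq_zero_of_mulVec_one_eq_zero [Nonempty ι] {M : Matrix ι ι R} (h : M *ᵥ 1 = 0) :
    M.det = 0 :=
  det_eq_zero_of_mulVec_eq_zero_of_mem_nonZeroDivisors h (i := Classical.arbitrary ι)
    (one_mem _)

theorem adjugate_apply_eq_of_mulVec_one_eq_zero {M : Matrix ι ι R} (h : M *ᵥ 1 = 0) (i j : ι) :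
    M.adjugate j i = M.adjugate i i := by
  have : Nonempty ι := ⟨i⟩
  have hsingular : (M.updateRow i (Pi.single j 1 - Pi.single i 1)).det = 0 := by
    refine det_eq_zero_of_mulVec_one_eq_zero (funext fun k => ?_)
    rcases eq_or_ne k i with rfl | hk
    · simp [mulVec, dotProduct, Finset.sum_sub_distrib]
    · simpa [mulVec, updateRow_ne hk] using congrFun h k
  rw [adjugate_apply, adjugate_apply, ← sub_add_cancel (Pi.single j 1 : ι → R) (Pi.single i 1),
    det_updateRow_add, hsingular, zero_add]

theorem vecMul_diag_adjugate_of_mulVec_one_eq_zero {M : Matrix ι ι R} (h : M *ᵥ 1 = 0) :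
    M.adjugate.diag ᵥ* M = 0 := by
  funext j
  calc (M.adjugate.diag ᵥ* M) j = (M.adjugate * M) j j := by
        simp only [vecMul, dotProduct, diag, mul_apply,
          adjugate_apply_eq_of_mulVec_one_eq_zero h _ j]
    _ = 0 := by
        have : Nonempty ι := ⟨j⟩
        simp [adjugate_mul, det_eq_zero_of_mulVec_one_eq_zero h]

theorem adjugate_fin_succ_apply_self {n : ℕ} (M : Matrix (Fin (n + 1)) (Fin (n + 1)) R)
    (i : Fin (n + 1)) : M.adjugate i i = (M.submatrix i.succAbove i.succAbove).det := by
  rw [adjugate_fin_succ_eq_det_submatrix, (Even.add_self (i : ℕ)).neg_one_pow, one_mul]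

end Matrix

/-- If a square matrix `M` over a commutative ring has all row sums zero
(i.e. annihilates the all-ones column vector), then the row vector of principal minors
`m_i = det (M with row i and column i deleted)` satisfies `(m_1, …, m_n) · M = 0`. -/
theorem stmt0 {n : ℕ} {R : Type*} [CommRing R] (M : Matrix (Fin (n + 1)) (Fin (n + 1)) R)
    (hrow : ∀ i, ∑ j, M i j = 0) :
    Matrix.vecMul (fun i => (M.submatrix i.succAbove i.succAbove).det) M = 0 := by
  have hones : M.mulVec 1 = 0 := funext fun i => by simpa [Matrix.mulVec, dotProduct] using hrow i
  have hminors : M.adjugate.diag = fun i => (M.submatrix i.succAbove i.succAbove).det :=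
    funext (Matrix.adjugate_fin_succ_apply_self M)
  rw [← hminors]
  exact Matrix.vecMul_diag_adjugate_of_mulVec_one_eq_zero hones
end

section
/- Let D be a division ring and t a central variable. If M ∈ D^{n×n} and there exists a nonzero matrix P over D with (1−t)^n·(1−tM)^{-1} evaluable at t = 1 with nonzero value P for some n > 0 (where (1−tM)^{-1} is computed in D((t))), then P·M = P; in particular M has the eigenvalue 1. -/
/-- A power series `S ∈ D[[t]]` (lying in `D(t)`) is *evaluable at `t = 1` with value `v`*
if it can be written `S = Q R⁻¹` with polynomials `Q, R ∈ D[t]`, `R(1) ≠ 0`, and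
`v = Q(1) R(1)⁻¹`. (Writing `S = (1−t)^m Q' R'⁻¹` with `Q'(1), R'(1) ≠ 0`, this holds
exactly when `m ≥. 0`, the value being `Q'(1)R'(1)⁻¹` if `m = 0` and `0` if `m > 0`.) -/
def EvalAtOne {D : Type*} [DivisionRing D] (S : PowerSeries D) (v : D) : Prop :=
  ∃ Q R : Polynomial D, Polynomial.eval 1 R ≠ 0 ∧
    S * PowerSeries.mk (fun m => R.coeff m) = PowerSeries.mk (fun m => Q.coeff m) ∧
    v = Polynomial.eval 1 Q * (Polynomial.eval 1 R)⁻¹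

/-!
Put `F = (1 - t)^m S`. The identity `S (1 - tM) = 1` becomes `F = (1 - t)^m + F · tM`, entrywise
`F i j = (1 - t)^m δ i j + ∑ l, F i l · t · M l j`. Evaluability at `t = 1` is preserved by sums
and by right multiplication by `t` and by constants, and the value is unique; evaluating both
sides gives `P i j = 0 + ∑ l, P i l M l j`. Additivity and uniqueness need common right multiples
of two denominators that still do not vanish at `1`: these come from the right Ore condition in
`D[t]`, after cancelling the central factors `t - 1` the multipliers may pick up.
-/

open Polynomial

namespace Polynomial

section Semiring

variable {R : Type*} [Semiring R]

theorem eval_one_mul (p q : R[X]) : (p * q).eval 1 = p.eval 1 * q.eval 1 :=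
  eval₂_mul_noncomm _ _ fun _ => Commute.one_right _

theorem mul_coe_mul_eq {S : PowerSeries R} {Q P : R[X]} (h : S * P = Q) (A : R[X]) :
    S * (P * A : R[X]) = (Q * A : R[X]) := by
  rw [coe_mul, coe_mul, ← mul_assoc, h]

end Semiring

section Ring

variable {R : Type*} [Ring R]

theorem commute_X_sub_one (p : R[X]) : Commute (X - 1) p :=
  (commute_X p).sub_left (Commute.one_left p)

theorem exists_eq_X_sub_one_mul_of_eval_one_eq_zero [Nontrivial R] {p : R[X]}
    (hp : p.eval 1 = 0) : ∃ q, p = (X - 1) * q := by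
  have hmonic : (X - C 1 : R[X]).Monic := monic_X_sub_C 1
  have hr : p %ₘ (X - C 1) = C ((p %ₘ (X - C 1)).coeff 0) := by
    apply eq_C_of_degree_le_zero
    rw [← Nat.WithBot.lt_one_iff_le_zero, ← degree_X_sub_C (1 : R)]
    exact degree_modByMonic_lt p hmonic
  have hdiv := modByMonic_add_div p (X - C 1)
  have hr0 : (p %ₘ (X - C 1)).coeff 0 = 0 := by
    have := congrArg (eval 1) hdiv
    rwa [eval_add, eval_one_mul, hr, eval_C, eval_sub, eval_X, eval_C, sub_self, zero_mul,
      add_zero, hp] at this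
  rw [hr, hr0, C_0, zero_add, C_1] at hdiv
  exact ⟨_, hdiv.symm⟩

end Ring

variable {D : Type*} [DivisionRing D]

theorem eval_one_mul_mul_inv_eval_one_mul (Q R : D[X]) {A : D[X]} (hA : A.eval 1 ≠ 0) :
    (Q * A).eval 1 * ((R * A).eval 1)⁻¹ = Q.eval 1 * (R.eval 1)⁻¹ := by
  rw [eval_one_mul, eval_one_mul, mul_inv_rev, mul_assoc, mul_inv_cancel_left₀ hA]

theorem exists_eq_mul_add_degree_lt {b : D[X]} (hb : b ≠ 0) (a : D[X]) :
    ∃ q r, a = b * q + r ∧ r.degree < b.degree := by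
  have hc : b.leadingCoeff⁻¹ ≠ 0 := inv_ne_zero (leadingCoeff_ne_zero.mpr hb)
  have hmonic : (b * C b.leadingCoeff⁻¹).Monic := by
    rw [Monic, leadingCoeff_mul, leadingCoeff_C, mul_inv_cancel₀ (leadingCoeff_ne_zero.mpr hb)]
  refine ⟨C b.leadingCoeff⁻¹ * (a /ₘ (b * C b.leadingCoeff⁻¹)), a %ₘ (b * C b.leadingCoeff⁻¹),
    ?_, ?_⟩
  · rw [← mul_assoc, add_comm, modByMonic_add_div]
  · exact (degree_modByMonic_lt a hmonic).trans_eq (degree_mul_C hc)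

/-- The right Ore condition in `D[X]`, via the Euclidean algorithm. -/
theorem exists_ne_zero_mul_eq_mul (a : D[X]) {b : D[X]} (hb : b ≠ 0) :
    ∃ A B : D[X], A ≠ 0 ∧ a * A = b * B := by
  induction hn : b.natDegree using Nat.strong_induction_on generalizing a b with
  | _ n ih =>
  obtain ⟨q, r, rfl, hr⟩ := exists_eq_mul_add_degree_lt hb a
  rcases eq_or_ne r 0 with rfl | hr0
  · exact ⟨1, q, one_ne_zero, by rw [add_zero, mul_one]⟩
  obtain ⟨A, B, hA, hbr⟩ := ih _ (hn ▸ natDegree_lt_natDegree hr0 hr) b hr0 rfl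
  refine ⟨B, q * B + A, ?_, ?_⟩
  · rintro rfl
    exact mul_ne_zero hb hA (hbr.trans (mul_zero r))
  · rw [add_mul, mul_add, ← mul_assoc, hbr]

theorem exists_mul_eq_mul_eval_one_ne_zero {a b : D[X]} (ha : a.eval 1 ≠ 0)
    (hb : b.eval 1 ≠ 0) : ∃ A B : D[X], a * A = b * B ∧ A.eval 1 ≠ 0 ∧ B.eval 1 ≠ 0 := by
  obtain ⟨A, B, hA, hAB⟩ := exists_ne_zero_mul_eq_mul a (b := b) (by rintro rfl; simp at hb)
  induction hn : A.natDegree using Nat.strong_induction_on generalizing A B with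
  | _ n ih =>
  have heval : a.eval 1 * A.eval 1 = b.eval 1 * B.eval 1 := by
    rw [← eval_one_mul, ← eval_one_mul, hAB]
  by_cases hA1 : A.eval 1 = 0
  · have hB1 : B.eval 1 = 0 := by
      rw [hA1, mul_zero] at heval
      exact (mul_eq_zero.mp heval.symm).resolve_left hb
    obtain ⟨A₁, rfl⟩ := exists_eq_X_sub_one_mul_of_eval_one_eq_zero hA1
    obtain ⟨B₁, rfl⟩ := exists_eq_X_sub_one_mul_of_eval_one_eq_zero hB1
    have hX : (X - 1 : D[X]) ≠ 0 := by simpa using X_sub_C_ne_zero (1 : D)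
    have hA₁ : A₁ ≠ 0 := right_ne_zero_of_mul hA
    refine ih A₁.natDegree ?_ A₁ B₁ hA₁ ?_ rfl
    · rw [← hn, natDegree_mul hX hA₁, ← C_1, natDegree_X_sub_C]
      omega
    · apply mul_left_cancel₀ hX
      rw [(commute_X_sub_one a).left_comm, hAB, (commute_X_sub_one b).left_comm]
  · refine ⟨A, B, hAB, hA1, fun hB1 => ?_⟩
    rw [hB1, mul_zero] at heval
    exact mul_ne_zero ha hA1 heval

end Polynomial

namespace EvalAtOne

variable {D : Type*} [DivisionRing D] {S T : PowerSeries D} {v w : D}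

theorem iff_exists : EvalAtOne S v ↔ ∃ Q R : D[X], R.eval 1 ≠ 0 ∧
    S * (R : PowerSeries D) = Q ∧ v = Q.eval 1 * (R.eval 1)⁻¹ :=
  Iff.rfl

theorem of_mul_eq {Q R : D[X]} (hR : R.eval 1 ≠ 0) (h : S * (R : PowerSeries D) = Q) :
    EvalAtOne S (Q.eval 1 * (R.eval 1)⁻¹) :=
  ⟨Q, R, hR, h, rfl⟩

theorem coe (p : D[X]) : EvalAtOne (p : PowerSeries D) (p.eval 1) := by
  simpa using of_mul_eq (S := p) (Q := p) (R := 1) (by simp) (by simp)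

theorem unique (h₁ : EvalAtOne S v) (h₂ : EvalAtOne S w) : v = w := by
  obtain ⟨Q, R, hR, hQ, rfl⟩ := iff_exists.mp h₁
  obtain ⟨Q', R', hR', hQ', rfl⟩ := iff_exists.mp h₂
  obtain ⟨A, B, hAB, hA, hB⟩ := exists_mul_eq_mul_eval_one_ne_zero hR hR'
  have hQAB : Q * A = Q' * B := by
    rw [← coe_inj, ← mul_coe_mul_eq hQ, ← mul_coe_mul_eq hQ', hAB]
  rw [← eval_one_mul_mul_inv_eval_one_mul Q R hA, ← eval_one_mul_mul_inv_eval_one_mul Q' R' hB,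
    hQAB, hAB]

theorem add (h₁ : EvalAtOne S v) (h₂ : EvalAtOne T w) : EvalAtOne (S + T) (v + w) := by
  obtain ⟨Q, R, hR, hQ, rfl⟩ := iff_exists.mp h₁
  obtain ⟨Q', R', hR', hQ', rfl⟩ := iff_exists.mp h₂
  obtain ⟨A, B, hAB, hA, hB⟩ := exists_mul_eq_mul_eval_one_ne_zero hR hR'
  have hRA : (R * A).eval 1 ≠ 0 := by
    rw [eval_one_mul]
    exact mul_ne_zero hR hA
  convert of_mul_eq (Q := Q * A + Q' * B) hRA ?_ using 1
  · rw [eval_add, add_mul, eval_one_mul_mul_inv_eval_one_mul Q R hA, hAB,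
      eval_one_mul_mul_inv_eval_one_mul Q' R' hB]
  · rw [add_mul, mul_coe_mul_eq hQ, hAB, mul_coe_mul_eq hQ', coe_add]

theorem sum {ι : Type*} (s : Finset ι) {f : ι → PowerSeries D} {v : ι → D}
    (h : ∀ i ∈ s, EvalAtOne (f i) (v i)) : EvalAtOne (∑ i ∈ s, f i) (∑ i ∈ s, v i) := by
  simpa [Prod.fst_sum, Prod.snd_sum] using Finset.sum_induction (fun i => (f i, v i))
    (fun z => EvalAtOne z.1 z.2) (fun _ _ => add) (by simpa using coe (0 : D[X])) h

theorem mul_X (h : EvalAtOne S v) : EvalAtOne (S * PowerSeries.X) v := by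
  obtain ⟨Q, R, hR, hQ, rfl⟩ := iff_exists.mp h
  convert of_mul_eq (Q := Q * X) hR ?_ using 1
  · rw [eval_mul_X, mul_one]
  · rw [coe_mul, coe_X, mul_assoc, ← (PowerSeries.commute_X _).eq, ← mul_assoc, hQ]

theorem mul_C (h : EvalAtOne S v) (c : D) : EvalAtOne (S * PowerSeries.C c) (v * c) := by
  obtain ⟨Q, R, hR, hQ, rfl⟩ := iff_exists.mp h
  rcases eq_or_ne c 0 with rfl | hc
  · simpa using coe (0 : D[X])
  have hR' : (C c⁻¹ * R * C c).eval 1 ≠ 0 := by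
    simpa [eval_one_mul, hc] using hR
  convert of_mul_eq (Q := Q * C c) hR' ?_ using 1
  · simp [eval_one_mul, mul_inv_rev, mul_assoc, hc]
  · rw [coe_mul, coe_mul, coe_mul, coe_C, coe_C, ← mul_assoc, ← mul_assoc, mul_assoc S,
      ← map_mul, mul_inv_cancel₀ hc, map_one, mul_one, hQ]

end EvalAtOne

theorem Matrix.exists_vecMul_eq_self_of_mul_eq_self {κ ι R : Type*} [Fintype ι]
    [NonUnitalNonAssocSemiring R] {P : Matrix κ ι R} {M : Matrix ι ι R} (hP : P ≠ 0)
    (h : P * M = P) : ∃ v, v ≠ 0 ∧ Matrix.vecMul v M = v := by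
  obtain ⟨i, hi⟩ := Function.ne_iff.mp hP
  exact ⟨P i, hi, congrFun h i⟩

theorem Matrix.mul_eq_self_of_evalAtOne {ι D : Type*} [Fintype ι] [DecidableEq ι]
    [DivisionRing D] {M P : Matrix ι ι D} {F : Matrix ι ι (PowerSeries D)} {p : D[X]}
    (hp : p.eval 1 = 0)
    (hF : F * (1 - Matrix.of fun i j => PowerSeries.X * PowerSeries.C (M i j)) =
      (p : PowerSeries D) • 1)
    (hev : ∀ i j, EvalAtOne (F i j) (P i j)) : P * M = P := by
  ext i j
  have hFij : F i j = ((if i = j then p else 0 : D[X]) : PowerSeries D) +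
      ∑ l, F i l * PowerSeries.X * PowerSeries.C (M l j) := by
    rw [mul_sub, mul_one, sub_eq_iff_eq_add] at hF
    refine (congrFun (congrFun hF i) j).trans ?_
    simp [Matrix.mul_apply, Matrix.one_apply, apply_ite, mul_assoc]
  have h := (EvalAtOne.coe (if i = j then p else 0)).add
    (EvalAtOne.sum Finset.univ fun l _ => (hev i l).mul_X.mul_C (M l j))
  rw [← hFij, apply_ite (eval 1), hp, eval_zero, ite_self, zero_add] at h
  rw [Matrix.mul_apply]
  exact h.unique (hev i j)

theorem stmt3_general {k : ℕ} {D : Type*} [DivisionRing D] (M : Matrix (Fin k) (Fin k) D)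
    (S : Matrix (Fin k) (Fin k) (PowerSeries D))
    (hS1 : S * (1 - Matrix.of fun i j => PowerSeries.X * PowerSeries.C (M i j)) = 1)
    (m : ℕ) (hm : 0 < m) (P : Matrix (Fin k) (Fin k) D) (hP : P ≠ 0)
    (hev : ∀ i j, EvalAtOne ((1 - PowerSeries.X) ^ m * S i j) (P i j)) :
    P * M = P ∧ ∃ v : Fin k → D, v ≠ 0 ∧ Matrix.vecMul v M = v := by
  have hcoe : (((1 - X) ^ m : D[X]) : PowerSeries D) = (1 - PowerSeries.X) ^ m := by
    rw [← coeToPowerSeries.ringHom_apply, map_pow, map_sub, map_one,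
      coeToPowerSeries.ringHom_apply, coe_X]
  have hp : ((1 - X) ^ m : D[X]).eval 1 = 0 := by
    obtain ⟨m, rfl⟩ := Nat.exists_eq_succ_of_ne_zero hm.ne'
    simp [pow_succ, eval_one_mul]
  have hPM : P * M = P := Matrix.mul_eq_self_of_evalAtOne hp
    (F := (1 - PowerSeries.X : PowerSeries D) ^ m • S) (by rw [Matrix.smul_mul, hS1, hcoe]) hev
  exact ⟨hPM, Matrix.exists_vecMul_eq_self_of_mul_eq_self hP hPM⟩

/-- Let `D` be a division ring, `M ∈ D^{k×k}`, and `S = (1 − tM)⁻¹` (computed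
over `D[[t]]`, `t` a central variable). If for some `m > 0` the matrix `(1−t)^m S` is
evaluable at `t = 1` with nonzero value `P` over `D`, then `P M = P`; in particular `M` has
the eigenvalue 1. -/
theorem stmt3 {k : ℕ} {D : Type*} [DivisionRing D] (M : Matrix (Fin k) (Fin k) D)
    (S : Matrix (Fin k) (Fin k) (PowerSeries D))
    (hS1 : S * (1 - Matrix.of fun i j => PowerSeries.X * PowerSeries.C (M i j)) = 1)
    (hS2 : (1 - Matrix.of fun i j => PowerSeries.X * PowerSeries.C (M i j)) * S = 1)
    (m : ℕ) (hm : 0 < m) (P : Matrix (Fin k) (Fin k) D) (hP : P ≠ 0)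
    (hev : ∀ i j, EvalAtOne ((1 - PowerSeries.X) ^ m * S i j) (P i j)) :
    P * M = P ∧ ∃ v : Fin k → D, v ≠ 0 ∧ Matrix.vecMul v M = v :=
  stmt3_general M S hS1 m hm P hP hev
end

section
/- Let D be a division ring with elements a, b, c, d satisfying a + b = 1 and c + d = 1, with 1−a, 1−d, and c invertible. Set P₁ = 1 + b(1−d)^{-1} and P₂ = 1 + c(1−a)^{-1}. Then P₁ and P₂ are invertible and P₁^{-1}·a + P₂^{-1}·c = P₁^{-1} and P₁^{-1}·b + P₂^{-1}·d = P₂^{-1}; that is, the row vector (P₁^{-1}, P₂^{-1}) is fixed by the 2×2 matrix [[a,b],[c,d]]. -/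
/-!
Since `1 - d = c` and `1 - a = b`, we have `P₁ = b (b⁻¹ + c⁻¹)` and `P₂ = c (b⁻¹ + c⁻¹)`, so
`P₁⁻¹ b = P₂⁻¹ c = (b⁻¹ + c⁻¹)⁻¹`. This balance `x b = y c` is all a row vector `(x, y)` needs to be
fixed by a row-stochastic `2 × 2` matrix.
-/

section DivisionRing

variable {D : Type*} [DivisionRing D]

theorem one_add_mul_inv_eq_mul_inv_add_inv {b : D} (hb : b ≠ 0) (c : D) :
    1 + b * c⁻¹ = b * (b⁻¹ + c⁻¹) := by
  rw [mul_add, mul_inv_cancel₀ hb]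

theorem inv_one_add_mul_inv_mul_self {b : D} (hb : b ≠ 0) (c : D) :
    (1 + b * c⁻¹)⁻¹ * b = (b⁻¹ + c⁻¹)⁻¹ := by
  rw [one_add_mul_inv_eq_mul_inv_add_inv hb, mul_inv_rev, mul_assoc, inv_mul_cancel₀ hb, mul_one]

end DivisionRing

theorem fixed_row_of_mul_eq_mul {R : Type*} [Semiring R] {a b c d x y : R}
    (hab : a + b = 1) (hcd : c + d = 1) (h : x * b = y * c) :
    x * a + y * c = x ∧ x * b + y * d = y := by
  constructor
  · rw [← h, ← mul_add, hab, mul_one]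
  · rw [h, ← mul_add, hcd, mul_one]

/-- In a division ring with `a + b = 1`, `c + d = 1`, `b ≠ 0`, `c ≠ 0`, and with
`P₁ = 1 + b(1−d)⁻¹`, `P₂ = 1 + c(1−a)⁻¹` nonzero, the vector `(P₁⁻¹, P₂⁻¹)` is fixed by the
matrix `[[a,b],[c,d]]`: `P₁⁻¹ a + P₂⁻¹ c = P₁⁻¹` and `P₁⁻¹ b + P₂⁻¹ d = P₂⁻¹`. -/
theorem stmt6 {D : Type*} [DivisionRing D] (a b c d : D)
    (hab : a + b = 1) (hcd : c + d = 1) (hb : b ≠ 0) (hc : c ≠ 0)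
    (hP1 : 1 + b * (1 - d)⁻¹ ≠ 0) (hP2 : 1 + c * (1 - a)⁻¹ ≠ 0) :
    IsUnit (1 + b * (1 - d)⁻¹) ∧ IsUnit (1 + c * (1 - a)⁻¹) ∧
      (1 + b * (1 - d)⁻¹)⁻¹ * a + (1 + c * (1 - a)⁻¹)⁻¹ * c = (1 + b * (1 - d)⁻¹)⁻¹ ∧
      (1 + b * (1 - d)⁻¹)⁻¹ * b + (1 + c * (1 - a)⁻¹)⁻¹ * d = (1 + c * (1 - a)⁻¹)⁻¹ := by
  have h1a : 1 - a = b := by rw [← hab, add_sub_cancel_left]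
  have h1d : 1 - d = c := by rw [← hcd, add_sub_cancel_right]
  refine ⟨hP1.isUnit, hP2.isUnit, fixed_row_of_mul_eq_mul hab hcd ?_⟩
  rw [h1a, h1d, inv_one_add_mul_inv_mul_self hb, inv_one_add_mul_inv_mul_self hc, add_comm]
end

section
/- Let R be a ring, M an n×n matrix over the noncommutative power series ring R⟨⟨A⟩⟩ whose (i,j) entry is the single letter a_ij (the generic matrix over the free algebra on n² letters). For each i, let C_i be the characteristic series of nonempty paths from i to i not passing through i internally, and P_ij the characteristic series of paths from i to j not returning to i after the start. Then the matrix identity (1−M)^{-1} = D(C₁*, ..., C_n*) · (P_ij) holds in Q⟨⟨a_ij⟩⟩, where C* = (1−C)^{-1} and D denotes the diagonal matrix. Equivalently, the (i,j) entry of (1−M)^{-1} equals (1−C_i)^{-1}·P_ij. -/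
/-! Setup: the ring `ℚ⟨⟨a_ij⟩⟩` of noncommutative power series in the `n²` letters
`a_ij` (`1 ≤ i,j ≤ n`) is realized via its graded embedding into `ℚ⟨a_ij⟩[[t]]`,
sending a letter to `t·a_ij`: a noncommutative series is determined by its homogeneous
components, which are noncommutative polynomials, i.e. elements of the free algebra.
Words over the alphabet `{a_ij}` are lists of edges `(i,j)` of the complete digraph
on the vertex set `Fin n`, identified with paths. -/

/-- An edge of the complete digraph on `Fin n`, i.e. a letter `a_ij`. -/
abbrev Edge (n : ℕ) := Fin n × Fin n

/-- `isPath i j w = true` iff the word `w` is a path from `i` to `j`. -/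
def isPath {n : ℕ} (i j : Fin n) : List (Edge n) → Bool
  | [] => decide (i = j)
  | e :: rest => decide (i = e.1) && isPath e.2 j rest

/-- `firstRet i v w = true` iff `w` is a nonempty path from `v` which reaches `i`
exactly at its last step (and never before).  The code `C_i` (nonempty paths `i → i`
not passing through `i` internally) is `firstRet i i`. -/
def firstRet {n : ℕ} (i v : Fin n) : List (Edge n) → Bool
  | [] => false
  | e :: rest =>
      decide (v = e.1) && (if e.2 = i then rest.isEmpty else firstRet i e.2 rest)

/-- `avoidTo i v j w = true` iff `w` is a path from `v` to `j` never visiting `i`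
after its starting point.  `P_ij` is `avoidTo i i j` (so `P_ii = {ε}`). -/
def avoidTo {n : ℕ} (i v j : Fin n) : List (Edge n) → Bool
  | [] => decide (v = j)
  | e :: rest => decide (v = e.1) && !decide (e.2 = i) && avoidTo i e.2 j rest

/-- `avoidFrom i v w = true` iff `w` is a path from `v` never visiting `i` after its
starting point.  `P_i = ∑_j P_ij` is `avoidFrom i i`. -/
def avoidFrom {n : ℕ} (i v : Fin n) : List (Edge n) → Bool
  | [] => true
  | e :: rest => decide (v = e.1) && !decide (e.2 = i) && avoidFrom i e.2 rest

/-- The element of the free algebra corresponding to a word. -/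
noncomputable def wordOf {n : ℕ} (w : List (Edge n)) : FreeAlgebra ℚ (Edge n) :=
  (w.map (FreeAlgebra.ι ℚ)).prod

/-- The characteristic series (an element of `ℚ⟨⟨a_ij⟩⟩`) of the language of words
satisfying `p`: its homogeneous component of degree `m` is the sum of all words of
length `m` in the language. -/
noncomputable def ser {n : ℕ} (p : List (Edge n) → Bool) :
    PowerSeries (FreeAlgebra ℚ (Edge n)) :=
  PowerSeries.mk fun m =>
    ∑ w : List.Vector (Edge n) m, if p w.toList then wordOf w.toList else 0

/-- The generic `n × n` matrix `M = (a_ij)` over `ℚ⟨⟨a_ij⟩⟩`. -/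
noncomputable def genM (n : ℕ) :
    Matrix (Fin n) (Fin n) (PowerSeries (FreeAlgebra ℚ (Edge n))) :=
  Matrix.of fun i j => PowerSeries.X * PowerSeries.C (FreeAlgebra.ι ℚ (i, j))


/-! Let `L_ij` be the series of all paths `i → j`. Splitting off the first or the last letter of
a nonempty path gives `L = 1 + M L = 1 + L M`, so `L = (1 - M)⁻¹`. Cutting a nonempty loop at `i`
at its first return to `i` gives `L_ii = 1 + C_i L_ii`; as `1 - C_i` has constant coefficient `1`
it is a unit, so this one-sided identity already gives `L_ii = (1 - C_i)⁻¹`. Cutting a path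
`i → j` at its last visit to `i` gives `L_ij = L_ii P_ij`. All these cuts are unique, which is
what turns the factorizations of languages into products of series. -/
section Series

variable {n : ℕ}

def wordsOfLength (n m : ℕ) : Finset (List (Edge n)) :=
  (Finset.univ : Finset (List.Vector (Edge n) m)).map
    ⟨List.Vector.toList, List.Vector.toList_injective⟩

@[simp]
lemma mem_wordsOfLength {m : ℕ} {w : List (Edge n)} :
    w ∈ wordsOfLength n m ↔ w.length = m := by
  simp only [wordsOfLength, Finset.mem_map, Finset.mem_univ, true_and,
    Function.Embedding.coeFn_mk]
  exact ⟨fun ⟨v, hv⟩ => hv ▸ v.2, fun h => ⟨⟨w, h⟩, rfl⟩⟩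

lemma wordsOfLength_zero : wordsOfLength n 0 = {[]} := by
  ext w
  simp

lemma wordOf_append (u v : List (Edge n)) : wordOf (u ++ v) = wordOf u * wordOf v := by
  simp [wordOf]

lemma coeff_ser (p : List (Edge n) → Bool) (m : ℕ) :
    PowerSeries.coeff m (ser p) = ∑ w ∈ wordsOfLength n m, if p w then wordOf w else 0 := by
  rw [ser, PowerSeries.coeff_mk, wordsOfLength, Finset.sum_map]
  rfl

lemma constantCoeff_ser (p : List (Edge n) → Bool) :
    PowerSeries.constantCoeff (ser p) = if p [] then 1 else 0 := by
  rw [← PowerSeries.coeff_zero_eq_constantCoeff_apply, coeff_ser, wordsOfLength_zero,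
    Finset.sum_singleton]
  rfl

lemma ser_eq_ite_add (r : List (Edge n) → Bool) :
    ser r = (if r [] then 1 else 0) + ser (fun w => r w && !w.isEmpty) := by
  ext m
  rw [map_add, coeff_ser, coeff_ser]
  rcases m with _ | m
  · simp [wordsOfLength_zero, wordOf, apply_ite (PowerSeries.coeff 0)]
  · rw [apply_ite (PowerSeries.coeff (m + 1)), PowerSeries.coeff_one, map_zero,
      if_neg m.succ_ne_zero, ite_self, zero_add]
    refine Finset.sum_congr rfl fun w hw => ?_
    have : w.isEmpty = false := by
      rw [List.isEmpty_eq_false_iff, ← List.length_pos_iff]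
      simp_all
    simp [this]

lemma coeff_ser_singleton (u : List (Edge n)) (m : ℕ) :
    PowerSeries.coeff m (ser fun w => decide (w = u)) = if m = u.length then wordOf u else 0 := by
  rw [coeff_ser]
  split_ifs with hm
  · rw [Finset.sum_eq_single_of_mem u (by simp [hm])] <;> simp_all
  · exact Finset.sum_eq_zero fun w hw => by simp_all [show w ≠ u by rintro rfl; simp_all]

lemma genM_apply (i k : Fin n) : genM n i k = ser fun w => decide (w = [(i, k)]) := by
  ext m
  rw [coeff_ser_singleton, genM, Matrix.of_apply]
  rcases m with _ | m
  · simp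
  · rw [PowerSeries.coeff_succ_X_mul, PowerSeries.coeff_C]
    simp [wordOf]

lemma ser_mul_of_unique {p q r : List (Edge n) → Bool}
    (hr : ∀ w, r w = true ↔ ∃ u v, p u = true ∧ q v = true ∧ u ++ v = w)
    (huniq : ∀ u v u' v', p u = true → q v = true → p u' = true → q v' = true →
      u ++ v = u' ++ v' → u = u') :
    ser p * ser q = ser r := by
  ext m
  have hprod : ∀ ab : ℕ × ℕ,
      PowerSeries.coeff ab.1 (ser p) * PowerSeries.coeff ab.2 (ser q) =
        ∑ x ∈ wordsOfLength n ab.1 ×ˢ wordsOfLength n ab.2 with p x.1 ∧ q x.2,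
          wordOf (x.1 ++ x.2) := by
    intro ab
    rw [coeff_ser, coeff_ser, Finset.sum_mul_sum, ← Finset.sum_product', Finset.sum_filter]
    refine Finset.sum_congr rfl fun x _ => ?_
    by_cases hp : p x.1 <;> by_cases hq : q x.2 <;> simp [hp, hq, wordOf_append]
  rw [PowerSeries.coeff_mul, Finset.sum_congr rfl fun ab _ => hprod ab, Finset.sum_sigma',
    coeff_ser, ← Finset.sum_filter]
  refine Finset.sum_bij (fun x _ => x.2.1 ++ x.2.2) ?_ ?_ ?_ (fun _ _ => rfl)
  · rintro ⟨⟨a, b⟩, u, v⟩ hx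
    simp only [Finset.mem_sigma, Finset.mem_filter, Finset.mem_product, mem_wordsOfLength,
      Finset.HasAntidiagonal.mem_antidiagonal] at hx ⊢
    obtain ⟨rfl, ⟨rfl, rfl⟩, hp, hq⟩ := hx
    exact ⟨List.length_append, (hr _).2 ⟨u, v, hp, hq, rfl⟩⟩
  · rintro ⟨⟨a, b⟩, u, v⟩ hx ⟨⟨a', b'⟩, u', v'⟩ hx' huv
    simp only [Finset.mem_sigma, Finset.mem_filter, Finset.mem_product,
      mem_wordsOfLength] at hx hx'
    obtain ⟨-, ⟨rfl, rfl⟩, hp, hq⟩ := hx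
    obtain ⟨-, ⟨rfl, rfl⟩, hp', hq'⟩ := hx'
    obtain rfl := huniq u v u' v' hp hq hp' hq' huv
    obtain rfl := List.append_cancel_left huv
    rfl
  · intro w hw
    simp only [Finset.mem_filter, mem_wordsOfLength] at hw
    obtain ⟨u, v, hp, hq, rfl⟩ := (hr w).1 hw.2
    refine ⟨⟨(u.length, v.length), u, v⟩, ?_, rfl⟩
    simp [Finset.HasAntidiagonal.mem_antidiagonal, hp, hq, ← hw.1]

lemma ser_eq_sum_of_disjoint {ι : Type*} (s : Finset ι) {r : List (Edge n) → Bool}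
    {f : ι → List (Edge n) → Bool} (hr : ∀ w, r w = true ↔ ∃ k ∈ s, f k w = true)
    (hdisj : ∀ w, ∀ k ∈ s, ∀ k' ∈ s, f k w = true → f k' w = true → k = k') :
    ser r = ∑ k ∈ s, ser (f k) := by
  ext m
  simp only [map_sum, coeff_ser]
  rw [Finset.sum_comm]
  refine Finset.sum_congr rfl fun w _ => ?_
  by_cases hw : r w = true
  · obtain ⟨k, hk, hkw⟩ := (hr w).1 hw
    rw [Finset.sum_eq_single_of_mem k hk fun k' hk' hne => if_neg fun h' =>
      hne (hdisj w k' hk' k hk h' hkw), if_pos hw, if_pos hkw]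
  · rw [if_neg hw]
    exact (Finset.sum_eq_zero fun k hk => if_neg fun hkw => hw ((hr w).2 ⟨k, hk, hkw⟩)).symm

lemma ser_eq_sum_mul {ι : Type*} (s : Finset ι) {r : List (Edge n) → Bool}
    {p q : ι → List (Edge n) → Bool}
    (hr : ∀ w, r w = true ↔ ∃ k ∈ s, ∃ u v, p k u = true ∧ q k v = true ∧ u ++ v = w)
    (huniq : ∀ k ∈ s, ∀ k' ∈ s, ∀ u v u' v', p k u = true → q k v = true →
      p k' u' = true → q k' v' = true → u ++ v = u' ++ v' → k = k' ∧ u = u') :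
    ser r = ∑ k ∈ s, ser (p k) * ser (q k) := by
  classical
  let pq k w := decide (∃ u v, p k u = true ∧ q k v = true ∧ u ++ v = w)
  rw [ser_eq_sum_of_disjoint s (f := pq) (by simpa [pq] using hr) ?_]
  · refine Finset.sum_congr rfl fun k hk => (ser_mul_of_unique (by simp [pq]) ?_).symm
    exact fun u v u' v' hu hv hu' hv' h => (huniq k hk k hk u v u' v' hu hv hu' hv' h).2
  · simp only [pq, decide_eq_true_eq]
    rintro w k hk k' hk' ⟨u, v, hu, hv, rfl⟩ ⟨u', v', hu', hv', h⟩
    exact (huniq k hk k' hk' u v u' v' hu hv hu' hv' h.symm).1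

end Series

section Paths

variable {n : ℕ} {a b c i j v : Fin n} {e : Edge n} {u w x z : List (Edge n)}

lemma isPath_append_eq (hu : isPath a b u = true) : isPath a c (u ++ x) = isPath b c x := by
  induction u generalizing a with
  | nil => simp_all [isPath]
  | cons e rest ih =>
    simp only [isPath, Bool.and_eq_true, decide_eq_true_eq] at hu
    simp [isPath, hu.1, ih hu.2]

lemma isPath_concat : isPath a c (u ++ [e]) = (isPath a e.1 u && decide (e.2 = c)) := by
  induction u generalizing a with
  | nil => simp [isPath]
  | cons f rest ih => simp [isPath, ih, Bool.and_assoc]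

lemma exists_snd_eq_of_isPath (h : isPath a c w = true) (hw : w ≠ []) : ∃ e ∈ w, e.2 = c := by
  induction w generalizing a with
  | nil => exact absurd rfl hw
  | cons e rest ih =>
    simp only [isPath, Bool.and_eq_true] at h
    rcases rest with _ | ⟨f, rest⟩
    · exact ⟨e, by simp, by simpa [isPath] using h.2⟩
    · obtain ⟨e', he', hc⟩ := ih h.2 (List.cons_ne_nil _ _)
      exact ⟨e', List.mem_cons_of_mem _ he', hc⟩

lemma avoidTo_iff : avoidTo i v j w = true ↔ isPath v j w = true ∧ ∀ e ∈ w, e.2 ≠ i := by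
  induction w generalizing v with
  | nil => simp [avoidTo, isPath]
  | cons e rest ih => simp [avoidTo, isPath, ih, and_assoc, and_left_comm]

lemma isPath_of_firstRet (h : firstRet i v w = true) : isPath v i w = true := by
  induction w generalizing v with
  | nil => simp [firstRet] at h
  | cons e rest ih =>
    simp only [firstRet, Bool.and_eq_true, decide_eq_true_eq] at h
    split_ifs at h with he
    · simp_all [isPath]
    · simp [isPath, h.1, ih h.2]

lemma ne_nil_of_firstRet (h : firstRet i v w = true) : w ≠ [] := by
  rintro rfl
  simp [firstRet] at h

lemma firstRet_append_inj (hu : firstRet i v u = true) (hw : firstRet i v w = true)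
    (h : u ++ x = w ++ z) : u = w := by
  induction u generalizing v w with
  | nil => simp [firstRet] at hu
  | cons e rest ih =>
    obtain ⟨e', rest', rfl⟩ := List.exists_cons_of_ne_nil (ne_nil_of_firstRet hw)
    simp only [List.cons_append, List.cons.injEq] at h
    obtain ⟨rfl, h⟩ := h
    simp only [firstRet, Bool.and_eq_true] at hu hw
    split_ifs at hu hw with he
    · simp_all
    · rw [ih hu.2 hw.2 h]

lemma exists_firstRet_append (h : isPath v i w = true) (hw : w ≠ []) :
    ∃ u x, firstRet i v u = true ∧ isPath i i x = true ∧ u ++ x = w := by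
  induction w generalizing v with
  | nil => exact absurd rfl hw
  | cons e rest ih =>
    simp only [isPath, Bool.and_eq_true, decide_eq_true_eq] at h
    by_cases he : e.2 = i
    · exact ⟨[e], rest, by simp [firstRet, h.1, he], he ▸ h.2, rfl⟩
    · have hrest : rest ≠ [] := by
        rintro rfl
        exact he (by simpa [isPath] using h.2)
      obtain ⟨u, x, hu, hx, rfl⟩ := ih h.2 hrest
      exact ⟨e :: u, x, by simp [firstRet, h.1, he, hu], hx, rfl⟩

lemma exists_isPath_append_avoidTo (h : isPath v j w = true) (hi : ∃ e ∈ w, e.2 = i) :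
    ∃ u z, isPath v i u = true ∧ avoidTo i i j z = true ∧ u ++ z = w := by
  induction w generalizing v with
  | nil => simp at hi
  | cons e rest ih =>
    simp only [isPath, Bool.and_eq_true, decide_eq_true_eq] at h
    by_cases hrest : ∃ e ∈ rest, e.2 = i
    · obtain ⟨u, z, hu, hz, rfl⟩ := ih h.2 hrest
      exact ⟨e :: u, z, by simp [isPath, h.1, hu], hz, rfl⟩
    · push Not at hrest
      have he : e.2 = i := by
        obtain ⟨e', he', hi⟩ := hi
        rcases List.mem_cons.1 he' with rfl | he'
        · exact hi
        · exact absurd hi (hrest e' he')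
      exact ⟨[e], rest, by simp [isPath, h.1, he], avoidTo_iff.2 ⟨he ▸ h.2, hrest⟩, rfl⟩

lemma eq_nil_of_isPath_append_of_avoidTo (hu : isPath a i u = true)
    (hux : isPath a i (u ++ x) = true) (hxz : avoidTo i i j (x ++ z) = true) : x = [] := by
  by_contra hx
  rw [isPath_append_eq hu] at hux
  obtain ⟨e, he, hei⟩ := exists_snd_eq_of_isPath hux hx
  exact (avoidTo_iff.1 hxz).2 e (List.mem_append_left z he) hei

lemma isPath_append_avoidTo_inj (hu : isPath a i u = true) (hw : isPath a i w = true)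
    (hx : avoidTo i i j x = true) (hz : avoidTo i i j z = true) (h : u ++ x = w ++ z) :
    u = w := by
  rcases List.append_eq_append_iff.1 h with ⟨y, rfl, rfl⟩ | ⟨y, rfl, rfl⟩
  · simp [eq_nil_of_isPath_append_of_avoidTo hu hw hx]
  · simp [eq_nil_of_isPath_append_of_avoidTo hw hu hz]

end Paths

section FirstReturn

variable {n : ℕ} (i j : Fin n)

lemma ser_isPath_eq_one_add_mul :
    ser (isPath i i) = 1 + ser (firstRet i i) * ser (isPath i i) := by
  rw [ser_mul_of_unique (r := fun w => isPath i i w && !w.isEmpty), ser_eq_ite_add (isPath i i)]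
  · simp [isPath]
  · intro w
    simp only [Bool.and_eq_true, Bool.not_eq_true', List.isEmpty_eq_false_iff]
    constructor
    · exact fun ⟨hw, hne⟩ => exists_firstRet_append hw hne
    · rintro ⟨u, x, hu, hx, rfl⟩
      rw [isPath_append_eq (isPath_of_firstRet hu)]
      exact ⟨hx, by simp [ne_nil_of_firstRet hu]⟩
  · exact fun u x w z hu _ hw _ h => firstRet_append_inj hu hw h

lemma ser_isPath_mul_ser_avoidTo : ser (isPath i i) * ser (avoidTo i i j) = ser (isPath i j) := by
  refine ser_mul_of_unique (fun w => ⟨fun hw => ?_, ?_⟩)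
    fun u x w z hu hx hw hz h => isPath_append_avoidTo_inj hu hw hx hz h
  · by_cases hi : ∃ e ∈ w, e.2 = i
    · exact exists_isPath_append_avoidTo hw hi
    · push Not at hi
      exact ⟨[], w, by simp [isPath], avoidTo_iff.2 ⟨hw, hi⟩, rfl⟩
  · rintro ⟨u, z, hu, hz, rfl⟩
    rw [isPath_append_eq hu]
    exact (avoidTo_iff.1 hz).1

lemma isUnit_one_sub_ser_firstRet : IsUnit (1 - ser (firstRet i i)) := by
  rw [PowerSeries.isUnit_iff_constantCoeff, map_sub, constantCoeff_ser]
  simp [firstRet]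

lemma ring_inverse_one_sub_ser_firstRet :
    Ring.inverse (1 - ser (firstRet i i)) = ser (isPath i i) := by
  obtain ⟨c, hc⟩ := isUnit_one_sub_ser_firstRet i
  rw [← hc, Ring.inverse_unit]
  refine Units.inv_eq_of_mul_eq_one_right ?_
  rw [hc, sub_mul, one_mul, sub_eq_iff_eq_add, ← ser_isPath_eq_one_add_mul]

end FirstReturn

section PathMatrix

variable {n : ℕ}

noncomputable def pathMatrix (n : ℕ) :
    Matrix (Fin n) (Fin n) (PowerSeries (FreeAlgebra ℚ (Edge n))) :=
  Matrix.of fun i j => ser (isPath i j)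

lemma pathMatrix_eq_one_add_genM_mul : pathMatrix n = 1 + genM n * pathMatrix n := by
  ext i j : 1
  simp only [pathMatrix, Matrix.add_apply, Matrix.one_apply, Matrix.mul_apply, Matrix.of_apply,
    genM_apply]
  rw [ser_eq_ite_add]
  refine congrArg₂ (· + ·) (by simp [isPath]) (ser_eq_sum_mul _ (fun w => ?_) ?_)
  · rcases w with _ | ⟨e, w⟩
    · simp
    · simp only [isPath, Bool.and_eq_true, decide_eq_true_eq, List.isEmpty_cons, Bool.not_false,
        and_true, Finset.mem_univ, true_and]
      constructor
      · rintro ⟨rfl, h⟩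
        exact ⟨e.2, _, w, rfl, h, rfl⟩
      · rintro ⟨k, _, v, rfl, h, hw⟩
        obtain ⟨rfl, rfl⟩ := List.cons_eq_cons.1 hw
        exact ⟨rfl, h⟩
  · rintro k - k' - u v u' v' hu - hu' - h
    simp only [decide_eq_true_eq] at hu hu'
    subst hu hu'
    simp_all

lemma pathMatrix_eq_one_add_mul_genM : pathMatrix n = 1 + pathMatrix n * genM n := by
  ext i j : 1
  simp only [pathMatrix, Matrix.add_apply, Matrix.one_apply, Matrix.mul_apply, Matrix.of_apply,
    genM_apply]
  rw [ser_eq_ite_add]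
  refine congrArg₂ (· + ·) (by simp [isPath]) (ser_eq_sum_mul _ (fun w => ?_) ?_)
  · rcases List.eq_nil_or_concat w with rfl | ⟨w, e, rfl⟩
    · simp
    · rw [List.concat_eq_append, isPath_concat]
      simp only [Bool.and_eq_true, decide_eq_true_eq, Finset.mem_univ, true_and]
      constructor
      · rintro ⟨⟨h, rfl⟩, -⟩
        exact ⟨e.1, w, _, h, rfl, rfl⟩
      · rintro ⟨k, u, _, h, rfl, hw⟩
        obtain ⟨rfl, he⟩ := List.append_inj' hw rfl
        obtain rfl := List.singleton_inj.1 he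
        simpa using h
  · rintro k - k' - u v u' v' - hv - hv' h
    simp only [decide_eq_true_eq] at hv hv'
    subst hv hv'
    obtain ⟨rfl, h⟩ := List.append_inj' h rfl
    simpa using h

lemma ring_inverse_one_sub_genM : Ring.inverse (1 - genM n) = pathMatrix n := by
  refine Ring.inverse_unit ⟨1 - genM n, pathMatrix n, ?_, ?_⟩
  · rw [sub_mul, one_mul, sub_eq_iff_eq_add, ← pathMatrix_eq_one_add_genM_mul]
  · rw [mul_sub, mul_one, sub_eq_iff_eq_add, ← pathMatrix_eq_one_add_mul_genM]

end PathMatrix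

/-- In `ℚ⟨⟨a_ij⟩⟩`, the matrix identity
`(1 − M)⁻¹ = D(C₁*, …, C_n*) · (P_ij)` holds, where `M` is the generic matrix,
`C_i` the first-return series at `i`, `C* = (1 − C)⁻¹`, and `P_ij` the series of paths
from `i` to `j` not returning to `i` — equivalently, the `(i,j)` entry of `(1 − M)⁻¹`
equals `(1 − C_i)⁻¹ · P_ij`. -/
theorem stmt9 (n : ℕ) :
    Ring.inverse (1 - genM n) =
      Matrix.diagonal (fun i => Ring.inverse (1 - ser (firstRet i i))) *
        Matrix.of (fun i j => ser (avoidTo i i j)) := by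
  rw [ring_inverse_one_sub_genM]
  ext i j
  rw [Matrix.diagonal_mul, Matrix.of_apply, ring_inverse_one_sub_ser_firstRet,
    ser_isPath_mul_ser_avoidTo]
  rfl
end

section
/- With the notation of the path decomposition: the matrix identity D(C₁ − 1, ..., C_n − 1) = (P_ij)·(M − 1) holds in Q⟨⟨a_ij⟩⟩, where D(u₁,...,u_n) is the diagonal matrix with entries u_i. -/
/-! Both sides are compared entrywise by removing the last letter of a word.  A nonempty path
counted by `P_ik` (`k ≠ i`) or by `C_i` ends with a letter `a_jk`, and what precedes it is a path
counted by `P_ij`; conversely any such path followed by `a_jk` is counted by `P_ik` if `k ≠ i` and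
by `C_i` if `k = i`.  Hence `P_ik = (P·M)_ik` for `k ≠ i`, `C_i = (P·M)_ii`, and `P_ii = 1`. -/

open PowerSeries

namespace List.Vector

def snocEquiv (α : Type*) (m : ℕ) : List.Vector α m × α ≃ List.Vector α (m + 1) where
  toFun p := p.1.snoc p.2
  invFun v := (v.reverse.tail.reverse, v.reverse.head)
  left_inv p := by simp [reverse_snoc, reverse_reverse]
  right_inv v := by
    have snoc_eq : ∀ (xs : List.Vector α m) (x : α), xs.snoc x = (x ::ᵥ xs.reverse).reverse :=
      fun xs x => by rw [reverse_cons, reverse_reverse]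
    simp only [snoc_eq, reverse_reverse, cons_head_tail]

lemma toList_snoc {α : Type*} {m : ℕ} (xs : List.Vector α m) (x : α) :
    (xs.snoc x).toList = xs.toList ++ [x] := by
  show (xs ++ (x ::ᵥ nil)).toList = _
  rw [toList_append]
  rfl

end List.Vector

section Paths

variable {n : ℕ}

lemma wordOf_append_singleton (w : List (Edge n)) (e : Edge n) :
    wordOf (w ++ [e]) = wordOf w * FreeAlgebra.ι ℚ e := by
  simp [wordOf]

lemma firstRet_append_singleton (i : Fin n) (e : Edge n) :
    ∀ (w : List (Edge n)) (v : Fin n),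
      firstRet i v (w ++ [e]) = (avoidTo i v e.1 w && decide (e.2 = i))
  | [], v => by by_cases h : e.2 = i <;> simp [firstRet, avoidTo, h]
  | f :: rest, v => by
      by_cases h : f.2 = i <;>
        simp [firstRet, avoidTo, h, firstRet_append_singleton i e rest f.2, Bool.and_assoc]

lemma avoidTo_append_singleton (i k : Fin n) (e : Edge n) :
    ∀ (w : List (Edge n)) (v : Fin n),
      avoidTo i v k (w ++ [e]) = (avoidTo i v e.1 w && decide (e.2 ≠ i ∧ e.2 = k))
  | [], v => by simp [avoidTo, Bool.and_assoc]
  | f :: rest, v => by simp [avoidTo, avoidTo_append_singleton i k e rest f.2, Bool.and_assoc]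

lemma coeff_zero_ser (p : List (Edge n) → Bool) :
    coeff 0 (ser p) = if p [] then 1 else 0 := by
  have : Unique (List.Vector (Edge n) 0) := ⟨⟨List.Vector.nil⟩, fun v => v.eq_nil⟩
  rw [ser, coeff_mk, Fintype.sum_unique]
  simp [wordOf]

lemma coeff_succ_ser (p : List (Edge n) → Bool) (m : ℕ) :
    coeff (m + 1) (ser p) =
      ∑ e : Edge n, coeff m (ser fun w => p (w ++ [e])) * FreeAlgebra.ι ℚ e := by
  simp only [ser, coeff_mk]
  rw [← (List.Vector.snocEquiv (Edge n) m).sum_comp, Fintype.sum_prod_type, Finset.sum_comm]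
  simp only [List.Vector.snocEquiv, Equiv.coe_fn_mk, List.Vector.toList_snoc,
    wordOf_append_singleton, Finset.sum_mul, ite_mul, zero_mul]

lemma ser_eq_ite_add_sum_mul_genM (p : List (Edge n) → Bool) :
    ser p = (if p [] then 1 else 0) +
      ∑ j, ∑ k, ser (fun w => p (w ++ [(j, k)])) * genM n j k := by
  ext (_ | m)
  · simp [coeff_zero_ser, genM, ← mul_assoc]
  · simp [coeff_succ_ser, genM, ← mul_assoc, coeff_mul_C, coeff_succ_mul_X,
      Fintype.sum_prod_type, apply_ite (coeff (m + 1))]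

lemma ser_false : ser (fun _ : List (Edge n) => false) = 0 := by
  ext
  simp [ser]

lemma ser_and_decide (p : List (Edge n) → Bool) (c : Prop) [Decidable c] :
    ser (fun w => p w && decide c) = if c then ser p else 0 := by
  by_cases hc : c <;> simp [hc, ser_false]

lemma ser_firstRet_self (i : Fin n) :
    ser (firstRet i i) = ∑ j, ser (avoidTo i i j) * genM n j i := by
  rw [ser_eq_ite_add_sum_mul_genM]
  simp only [firstRet_append_singleton, ser_and_decide, ite_mul, zero_mul,
    Finset.sum_ite_eq', Finset.mem_univ, if_true]
  simp [firstRet]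

lemma ser_avoidTo_of_ne {i k : Fin n} (hki : k ≠ i) :
    ser (avoidTo i i k) = ∑ j, ser (avoidTo i i j) * genM n j k := by
  rw [ser_eq_ite_add_sum_mul_genM]
  have hcond : ∀ k' : Fin n, (k' ≠ i ∧ k' = k) ↔ k' = k :=
    fun _ => ⟨And.right, fun h => ⟨h ▸ hki, h⟩⟩
  simp only [avoidTo_append_singleton, ser_and_decide, hcond, ite_mul, zero_mul,
    Finset.sum_ite_eq', Finset.mem_univ, if_true]
  simp [avoidTo, hki.symm]

lemma ser_avoidTo_self (i : Fin n) : ser (avoidTo i i i) = 1 := by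
  rw [ser_eq_ite_add_sum_mul_genM]
  simp only [avoidTo_append_singleton, ser_and_decide, ite_mul, zero_mul]
  simp [avoidTo]

end Paths

/-- In `ℚ⟨⟨a_ij⟩⟩`, the matrix identity
`D(C₁ − 1, …, C_n − 1) = (P_ij) · (M − 1)` holds, where `M` is the generic matrix,
`C_i` the first-return series at vertex `i`, and `P_ij` the series of paths from `i`
to `j` not passing through `i` after the start (`P_ii = 1`). -/
theorem stmt10 (n : ℕ) :
    Matrix.diagonal (fun i => ser (firstRet i i) - 1) =
      Matrix.of (fun i j => ser (avoidTo i i j)) * (genM n - 1) := by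
  ext i k : 1
  rw [mul_sub, mul_one, Matrix.sub_apply, Matrix.diagonal_apply, Matrix.mul_apply]
  simp only [Matrix.of_apply]
  obtain rfl | hik := eq_or_ne i k
  · rw [if_pos rfl, ser_firstRet_self, ser_avoidTo_self]
  · rw [if_neg hik, ← ser_avoidTo_of_ne hik.symm, sub_self]
end

section
/- Let π : A → ℝ assign positive weights summing to 1 to the letters of a finite alphabet A, extended multiplicatively to a monoid morphism A* → ℝ₊. If L ⊆ A* is a language that does not intersect some nonempty two-sided ideal of A* (i.e., there exists a word u such that no word of L contains u as a factor), then the sum of π(w) over w ∈ L is finite. -/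
/-!
Cut a word of length `m |u| + r` into `m` blocks of length `|u|` followed by a tail. The words
of any fixed length have total weight `(∑ π a)ⁿ = 1`, and a word avoiding `u` has no block equal
to `u`, so the words of length `m |u| + r` avoiding `u` have total weight at most `(1 - π u)ᵐ`.
Summing over all lengths gives a geometric series, convergent since `π u > 0`.
-/

open Finset List

namespace BernoulliMorphism

variable {A : Type*} (π : A → ℝ)

def weight (w : List A) : ℝ := (w.map π).prod

def avoiding (u : List A) : Set (List A) := {w | ¬ u <:+: w}

variable {π}

lemma weight_append (v w : List A) : weight π (v ++ w) = weight π v * weight π w := by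
  simp [weight]

lemma weight_nonneg (hπ : ∀ a, 0 ≤ π a) (w : List A) : 0 ≤ weight π w :=
  List.prod_nonneg (by simpa using fun a _ => hπ a)

lemma weight_pos (hπ : ∀ a, 0 < π a) (w : List A) : 0 < weight π w :=
  List.prod_pos (by simpa using fun a _ => hπ a)

lemma avoiding_nil : avoiding ([] : List A) = ∅ :=
  Set.eq_empty_of_forall_notMem fun _ h => h List.nil_infix

lemma indicator_avoiding_append_le (hπ : ∀ a, 0 ≤ π a) (u v w : List A) :
    (avoiding u).indicator (weight π) (v ++ w)
      ≤ ({u}ᶜ : Set (List A)).indicator (weight π) v * (avoiding u).indicator (weight π) w := by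
  by_cases h : u <:+: v ++ w
  · rw [Set.indicator_of_notMem (not_not.mpr h)]
    exact mul_nonneg (Set.indicator_nonneg (fun _ _ => weight_nonneg hπ _) _)
      (Set.indicator_nonneg (fun _ _ => weight_nonneg hπ _) _)
  · have hv : v ≠ u := by rintro rfl; exact h (List.prefix_append v w).isInfix
    have hw : ¬ u <:+: w := fun hw => h (hw.trans (List.suffix_append v w).isInfix)
    rw [Set.indicator_of_mem h, Set.indicator_of_mem hv, Set.indicator_of_mem hw, weight_append]

variable [Fintype A]

lemma sum_weight_ofFn (hsum : ∑ a, π a = 1) (n : ℕ) :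
    ∑ f : Fin n → A, weight π (ofFn f) = 1 := by
  simp only [weight, List.map_ofFn, List.prod_ofFn, Function.comp_apply]
  rw [← Fintype.prod_sum (fun (_ : Fin n) a => π a), hsum, prod_const_one]

lemma sum_indicator_compl_singleton_ofFn (hsum : ∑ a, π a = 1) (u : List A) :
    ∑ f : Fin u.length → A, ({u}ᶜ : Set (List A)).indicator (weight π) (ofFn f)
      = 1 - weight π u := by
  classical
  have hu : ofFn u.get = u := List.ofFn_get u
  have hsplit : ∑ f : Fin u.length → A, weight π (ofFn f)
      = weight π u + ∑ f ∈ univ.erase u.get, weight π (ofFn f) := by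
    rw [← add_sum_erase _ _ (mem_univ u.get), hu]
  have hind : ∑ f : Fin u.length → A, ({u}ᶜ : Set (List A)).indicator (weight π) (ofFn f)
      = ∑ f ∈ univ.erase u.get, weight π (ofFn f) := by
    rw [← sum_erase univ (a := u.get) (by simp [hu])]
    refine sum_congr rfl fun f hf => Set.indicator_of_mem ?_ _
    exact fun h => ne_of_mem_erase hf (List.ofFn_injective (h.trans hu.symm))
  rw [hind, ← sum_weight_ofFn hsum u.length, hsplit, add_sub_cancel_left]

lemma weight_le_one (hπ : ∀ a, 0 ≤ π a) (hsum : ∑ a, π a = 1) (w : List A) : weight π w ≤ 1 := by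
  simpa [sum_weight_ofFn hsum] using
    single_le_sum (fun f _ => weight_nonneg hπ (ofFn f)) (mem_univ w.get)

variable (π)

noncomputable def avoidingMass (u : List A) (n : ℕ) : ℝ :=
  ∑ f : Fin n → A, (avoiding u).indicator (weight π) (ofFn f)

variable {π}

lemma avoidingMass_nonneg (hπ : ∀ a, 0 ≤ π a) (u : List A) (n : ℕ) : 0 ≤ avoidingMass π u n :=
  sum_nonneg fun _ _ => Set.indicator_nonneg (fun _ _ => weight_nonneg hπ _) _

lemma avoidingMass_le_one (hπ : ∀ a, 0 ≤ π a) (hsum : ∑ a, π a = 1) (u : List A) (n : ℕ) :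
    avoidingMass π u n ≤ 1 :=
  (sum_weight_ofFn hsum n) ▸ sum_le_sum fun _ _ =>
    Set.indicator_le_self' (fun _ _ => weight_nonneg hπ _) _

lemma avoidingMass_length_add_le (hπ : ∀ a, 0 ≤ π a) (hsum : ∑ a, π a = 1) (u : List A)
    (n : ℕ) : avoidingMass π u (u.length + n) ≤ (1 - weight π u) * avoidingMass π u n := by
  rw [avoidingMass, ← (Fin.appendEquiv u.length n).sum_comp, Fintype.sum_prod_type,
    ← sum_indicator_compl_singleton_ofFn hsum, avoidingMass, sum_mul_sum]
  gcongr with a _ b _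
  have := indicator_avoiding_append_le hπ u (ofFn a) (ofFn b)
  rwa [← List.ofFn_fin_append] at this

lemma avoidingMass_mul_length_add_le (hπ : ∀ a, 0 ≤ π a) (hsum : ∑ a, π a = 1) (u : List A)
    (m r : ℕ) : avoidingMass π u (m * u.length + r) ≤ (1 - weight π u) ^ m := by
  induction m with
  | zero => simpa using avoidingMass_le_one hπ hsum u r
  | succ m ih =>
    calc avoidingMass π u ((m + 1) * u.length + r)
        = avoidingMass π u (u.length + (m * u.length + r)) := by congr 1; ring
      _ ≤ (1 - weight π u) * (1 - weight π u) ^ m :=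
        (avoidingMass_length_add_le hπ hsum u _).trans <|
          mul_le_mul_of_nonneg_left ih (sub_nonneg.mpr (weight_le_one hπ hsum u))
      _ = (1 - weight π u) ^ (m + 1) := (pow_succ' _ _).symm

lemma summable_avoidingMass (hπ : ∀ a, 0 < π a) (hsum : ∑ a, π a = 1) {u : List A}
    (hu : u ≠ []) : Summable (avoidingMass π u) := by
  have : NeZero u.length := ⟨by simpa using hu⟩
  have hπ₀ : ∀ a, 0 ≤ π a := fun a => (hπ a).le
  have hq₀ : 0 ≤ 1 - weight π u := sub_nonneg.mpr (weight_le_one hπ₀ hsum u)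
  have hq₁ : 1 - weight π u < 1 := sub_lt_self _ (weight_pos hπ u)
  rw [← (Nat.divModEquiv u.length).symm.summable_iff]
  refine Summable.of_nonneg_of_le (fun _ => avoidingMass_nonneg hπ₀ u _) (fun p => ?_)
    ((summable_geometric_of_lt_one hq₀ hq₁).mul_of_nonneg (Summable.of_finite (f := 1))
      (fun _ => pow_nonneg hq₀ _) zero_le_one)
  simpa using avoidingMass_mul_length_add_le hπ₀ hsum u p.1 p.2

lemma summable_indicator_avoiding (hπ : ∀ a, 0 < π a) (hsum : ∑ a, π a = 1) (u : List A) :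
    Summable ((avoiding u).indicator (weight π)) := by
  rcases eq_or_ne u [] with rfl | hu
  · simp [avoiding_nil, summable_zero]
  have hπ₀ : ∀ a, 0 ≤ π a := fun a => (hπ a).le
  refine List.equivSigmaTuple.symm.summable_iff.mp <|
    (summable_sigma_of_nonneg fun _ => Set.indicator_nonneg (fun _ _ => weight_nonneg hπ₀ _) _).mpr
      ⟨fun _ => Summable.of_finite,
        (summable_avoidingMass hπ hsum hu).congr fun n => (tsum_fintype _).symm⟩

end BernoulliMorphism

open BernoulliMorphism in
/-- Let `π` be a Bernoulli morphism on a finite alphabet (positive weights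
summing to 1, extended multiplicatively to words). If a language `L` avoids the two-sided
ideal `A* u A*` (no word of `L` has `u` as a factor), then `∑_{w ∈ L} π(w)` is finite. -/
theorem stmt14 {A : Type*} [Fintype A] (π : A → ℝ)
    (hpos : ∀ a, 0 < π a) (hsum : ∑ a, π a = 1)
    (L : Set (List A)) (u : List A)
    (hL : ∀ w ∈ L, ¬ u <:+: w) :
    Summable (fun w : L => ((w : List A).map π).prod) := by
  have hS : Summable fun w : avoiding u => weight π w :=
    summable_subtype_iff_indicator.mpr (summable_indicator_avoiding hpos hsum u)
  have hLu : L ⊆ avoiding u := hL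
  exact (hS.comp_injective (Set.inclusion_injective hLu) :)
end

section
/- Let R be an associative unital ring and A = (a_ij) an n×n matrix over R annihilating the column vector of all ones (all row sums are 0). For p ≠ q, if the quasideterminant |A^{pp}|_{qq} is defined (i.e., the relevant submatrix of A^{pp} with row q and column q deleted is invertible), then |A^{pq}|_{qp} is defined and |A^{pq}|_{qp} = −|A^{pp}|_{qq}. -/
/-! Write `ι` for the indices other than `p, q`, `M` for the `ι × ι` block of `A` (so `V M = 1`),
`r` for the `ι`-part of row `q` and `c_j` for the `ι`-part of column `j`. Both quasideterminants
are `A q j - r ⬝ V c_j` for `j = q, p`. The vanishing row sums give `c_p + c_q = -M 1`, so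
`r ⬝ V (c_p + c_q) = -r ⬝ V M 1 = -∑ r = A q p + A q q`, which is exactly the claim that the
two quasideterminants add up to zero. -/

open Matrix

theorem Fintype.sum_eq_add_add_sum_subtype_ne_and_ne {α M : Type*} [Fintype α] [DecidableEq α]
    [AddCommMonoid M] {p q : α} (hpq : p ≠ q) (f : α → M) :
    ∑ j, f j = f p + f q + ∑ k : {k : α // k ≠ p ∧ k ≠ q}, f k := by
  have hcompl : ∑ j ∈ {p, q}ᶜ, f j = ∑ k : {k : α // k ≠ p ∧ k ≠ q}, f k :=
    Finset.sum_subtype _ (fun x => by simp) f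
  rw [← hcompl, ← Finset.sum_pair hpq, Finset.sum_add_sum_compl]

section

variable {ι R : Type*} [Fintype ι] [Ring R]

theorem sum_sum_mul_mul_eq_dotProduct_mulVec (r : ι → R) (V : Matrix ι ι R) (c : ι → R) :
    ∑ l, ∑ k, r l * V l k * c k = r ⬝ᵥ (V *ᵥ c) := by
  simp only [dotProduct, mulVec, Finset.mul_sum, mul_assoc]

theorem dotProduct_mulVec_add_of_add_eq_neg_mulVec_one [DecidableEq ι] {V M : Matrix ι ι R}
    (hVM : V * M = 1) (r : ι → R) {c₁ c₂ : ι → R} (hc : c₁ + c₂ = -(M *ᵥ 1)) :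
    r ⬝ᵥ (V *ᵥ c₁) + r ⬝ᵥ (V *ᵥ c₂) = -∑ i, r i := by
  rw [← dotProduct_add, ← mulVec_add, hc, mulVec_neg, mulVec_mulVec, hVM, one_mulVec,
    dotProduct_neg, dotProduct_one]

theorem sum_sum_mul_mul_add_sum_sum_mul_mul_of_sum_row_eq_zero {α : Type*} [Fintype α]
    [DecidableEq α] (A : Matrix α α R) (hrow : ∀ i, ∑ j, A i j = 0) {p q : α} (hpq : p ≠ q)
    {V : Matrix {k : α // k ≠ p ∧ k ≠ q} {k : α // k ≠ p ∧ k ≠ q} R}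
    (hV : V * A.submatrix Subtype.val Subtype.val = 1) :
    ∑ l : {k : α // k ≠ p ∧ k ≠ q}, ∑ k : {k : α // k ≠ p ∧ k ≠ q}, A q l * V l k * A k p +
      ∑ l : {k : α // k ≠ p ∧ k ≠ q}, ∑ k : {k : α // k ≠ p ∧ k ≠ q}, A q l * V l k * A k q =
      A q p + A q q := by
  have hsplit (i : α) := Fintype.sum_eq_add_add_sum_subtype_ne_and_ne hpq (A i)
  have hcol : (fun k : {k : α // k ≠ p ∧ k ≠ q} => A k p) +
      (fun k : {k : α // k ≠ p ∧ k ≠ q} => A k q) =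
      -(A.submatrix Subtype.val Subtype.val *ᵥ (1 : {k : α // k ≠ p ∧ k ≠ q} → R)) := by
    ext k
    simpa [mulVec, dotProduct, eq_neg_iff_add_eq_zero, ← hsplit] using hrow k
  have hrow_q : ∑ k : {k : α // k ≠ p ∧ k ≠ q}, A q k = -(A q p + A q q) := by
    rw [eq_neg_iff_add_eq_zero, add_comm, ← hsplit, hrow]
  simp only [sum_sum_mul_mul_eq_dotProduct_mulVec (fun l : {k : α // k ≠ p ∧ k ≠ q} => A q l) V]
  rw [dotProduct_mulVec_add_of_add_eq_neg_mulVec_one hV _ hcol, hrow_q, neg_neg]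

end

theorem stmt16_general {R : Type*} [Ring R] {n : ℕ} (A : Matrix (Fin n) (Fin n) R)
    (hrow : ∀ i, ∑ j, A i j = 0) (p q : Fin n) (hpq : p ≠ q)
    (V : Matrix {k : Fin n // k ≠ p ∧ k ≠ q} {k : Fin n // k ≠ p ∧ k ≠ q} R)
    (hV2 : V * (A.submatrix (fun k : {k : Fin n // k ≠ p ∧ k ≠ q} => k.1)
        (fun k : {k : Fin n // k ≠ p ∧ k ≠ q} => k.1)) = 1) :
    A q p - ∑ l : {k : Fin n // k ≠ p ∧ k ≠ q}, ∑ k : {k : Fin n // k ≠ p ∧ k ≠ q},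
        A q l.1 * V l k * A k.1 p =
      -(A q q - ∑ l : {k : Fin n // k ≠ p ∧ k ≠ q}, ∑ k : {k : Fin n // k ≠ p ∧ k ≠ q},
        A q l.1 * V l k * A k.1 q) := by
  have hsum := sum_sum_mul_mul_add_sum_sum_mul_mul_of_sum_row_eq_zero A hrow hpq hV2
  rw [neg_sub, sub_eq_sub_iff_add_eq_add, ← hsum, add_comm]

/-- Let `A` be an `n×n` matrix over a unital ring all of whose row sums vanish
(`A` annihilates the all-ones column), and let `p ≠ q`.  Suppose the quasideterminant
`|A^{pp}|_{qq}` is defined, i.e. the submatrix of `A` obtained by deleting rows and columns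
`p` and `q` is invertible (with two-sided inverse `V`).  Then `|A^{pq}|_{qp}` is defined and
`|A^{pq}|_{qp} = −|A^{pp}|_{qq}`.  Here, with `r_i`/`c_j` denoting the corresponding deleted
row/column, `|B|_{ij} = b_{ij} − r_i (B^{ij})⁻¹ c_j`, so
`|A^{pp}|_{qq} = A q q − ∑_{l,k ∉ {p,q}} A q l · V l k · A k q` and
`|A^{pq}|_{qp} = A q p − ∑_{l,k ∉ {p,q}} A q l · V l k · A k p`. -/
theorem stmt16 {R : Type*} [Ring R] {n : ℕ} (A : Matrix (Fin n) (Fin n) R)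
    (hrow : ∀ i, ∑ j, A i j = 0) (p q : Fin n) (hpq : p ≠ q)
    (V : Matrix {k : Fin n // k ≠ p ∧ k ≠ q} {k : Fin n // k ≠ p ∧ k ≠ q} R)
    (hV1 : (A.submatrix (fun k : {k : Fin n // k ≠ p ∧ k ≠ q} => k.1)
        (fun k : {k : Fin n // k ≠ p ∧ k ≠ q} => k.1)) * V = 1)
    (hV2 : V * (A.submatrix (fun k : {k : Fin n // k ≠ p ∧ k ≠ q} => k.1)
        (fun k : {k : Fin n // k ≠ p ∧ k ≠ q} => k.1)) = 1) :
    A q p - ∑ l : {k : Fin n // k ≠ p ∧ k ≠ q}, ∑ k : {k : Fin n // k ≠ p ∧ k ≠ q},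
        A q l.1 * V l k * A k.1 p =
      -(A q q - ∑ l : {k : Fin n // k ≠ p ∧ k ≠ q}, ∑ k : {k : Fin n // k ≠ p ∧ k ≠ q},
        A q l.1 * V l k * A k.1 q) :=
  stmt16_general A hrow p q hpq V hV2
end

section
/- Let D be a division ring, t a central variable, and M ∈ D^{n×n}. If M does not have eigenvalue 1 (no nonzero column vector c over D with Mc = c), then the matrix (1 − tM)^{-1} over D(t) is evaluable at t = 1, and its value equals (1 − M)^{-1}. -/
open Polynomial Finset Matrix MulOpposite

namespace Polynomial

/-- Unlike `Polynomial.evalRingHom`, this needs no commutativity: `1` is central. -/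
def evalOneRingHom (R : Type*) [Semiring R] : R[X] →+* R :=
  eval₂RingHom' (RingHom.id R) 1 fun a => Commute.one_right a

@[simp]
theorem evalOneRingHom_apply {R : Type*} [Semiring R] (p : R[X]) :
    evalOneRingHom R p = p.eval 1 :=
  eval₂_id

theorem exists_eq_X_sub_one_mul {R : Type*} [Ring R] [Nontrivial R] {p : R[X]}
    (hp : p.eval 1 = 0) : ∃ q, p = (X - 1) * q := by
  have hmonic : (X - 1 : R[X]).Monic := by simpa using monic_X_sub_C (1 : R)
  have hdiv := modByMonic_add_div p (X - 1)
  have hrem : p %ₘ (X - 1) = C ((p %ₘ (X - 1)).coeff 0) :=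
    eq_C_of_degree_le_zero <| Nat.WithBot.lt_one_iff_le_zero.mp <| by
      have h := degree_modByMonic_lt p hmonic
      rwa [← C_1, degree_X_sub_C] at h
  refine ⟨p /ₘ (X - 1), ?_⟩
  have hcoeff : (p %ₘ (X - 1)).coeff 0 = 0 := by
    have := congrArg (evalOneRingHom R) hdiv
    rw [map_add, map_mul, hrem] at this
    simpa [hp] using this
  rw [hcoeff, C_0] at hrem
  rw [hrem, zero_add] at hdiv
  exact hdiv.symm

end Polynomial

theorem RingHom.mapMatrix_scalar {α β n : Type*} [Semiring α] [Semiring β] [Fintype n]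
    [DecidableEq n] (f : α →+* β) (a : α) : f.mapMatrix (scalar n a) = scalar n (f a) := by
  simp [diagonal_map]

theorem eq_geom_sum_add_mul_pow {A : Type*} [Ring A] {S T : A} (hS : S * (1 - T) = 1) (j : ℕ) :
    S = ∑ i ∈ range j, T ^ i + S * T ^ j := by
  have h := congrArg (S * ·) (mul_neg_geom_sum T j)
  simp only [← mul_assoc, hS, one_mul, mul_sub, mul_one] at h
  rw [h, sub_add_cancel]

theorem mul_sum_pow_mul_eq_of_mul_one_sub_eq_one {A : Type*} [Ring A] {x m S : A}
    (hx : ∀ a, Commute x a) (hS : S * (1 - x * m) = 1) {N : ℕ} {d : ℕ → A}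
    (hd : ∑ r ∈ range (N + 1), m ^ (N - r) * d r = 0) :
    S * ∑ r ∈ range (N + 1), x ^ r * d r =
      ∑ r ∈ range (N + 1), x ^ r * (∑ i ∈ range (N - r), (x * m) ^ i) * d r := by
  have hstep : ∀ r ∈ range (N + 1), S * (x ^ r * d r) =
      x ^ r * (∑ i ∈ range (N - r), (x * m) ^ i) * d r + x ^ N * S * (m ^ (N - r) * d r) := by
    intro r hr
    conv_lhs => rw [← mul_assoc, ((hx S).pow_left r).eq.symm, eq_geom_sum_add_mul_pow hS (N - r),
      (hx m).mul_pow]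
    rw [← pow_mul_pow_sub x (Nat.lt_succ_iff.mp (mem_range.mp hr))]
    simp only [mul_add, add_mul, mul_assoc, ((hx S).pow_left (N - r)).eq]
  rw [mul_sum, sum_congr rfl hstep, sum_add_distrib, ← mul_sum, hd, mul_zero, add_zero]

section

variable {D n : Type*} [DivisionRing D] [Fintype n] [DecidableEq n]

theorem Matrix.isUnit_one_sub {M : Matrix n n D} (hM : ∀ c, M *ᵥ c = c → c = 0) :
    IsUnit (1 - M) := by
  refine IsArtinianRing.isUnit_iff_isLeftRegular.mpr
    (isLeftRegular_iff_mulVec_injective.mpr fun v w h => ?_)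
  rw [← sub_eq_zero]
  apply hM
  simp only [sub_mulVec, one_mulVec] at h
  rw [mulVec_sub]
  exact (sub_eq_sub_iff_sub_eq_sub.mp h).symm

theorem Matrix.exists_sum_pow_mul_scalar_coeff_eq_zero (M : Matrix n n D) :
    ∃ (N : ℕ) (R : D[X]), R ≠ 0 ∧ R.natDegree ≤ N ∧
      ∑ r ∈ range (N + 1), M ^ (N - r) * scalar n (R.coeff r) = 0 := by
  -- Under `map op`, right multiplication by `D` becomes the `Dᵐᵒᵖ`-module structure.
  set N := Module.finrank Dᵐᵒᵖ (Matrix n n Dᵐᵒᵖ)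
  have hdep : ¬ LinearIndependent Dᵐᵒᵖ fun r : Fin (N + 1) => (M ^ (N - r)).map op :=
    fun h => by simpa [N] using h.fintype_card_le_finrank
  obtain ⟨g, hg, r₀, hr₀⟩ := Fintype.not_linearIndependent_iff.mp hdep
  set R := ((degreeLTEquiv D (N + 1)).symm fun r => unop (g r) : D[X])
  have hcoeff (r : Fin (N + 1)) : R.coeff r = unop (g r) :=
    congrFun ((degreeLTEquiv D (N + 1)).apply_symm_apply _) r
  refine ⟨N, R, fun h => hr₀ ?_, ?_, ?_⟩
  · simpa [h] using (hcoeff r₀).symm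
  · have := ((degreeLTEquiv D (N + 1)).symm fun r => unop (g r)).2
    rw [mem_degreeLT] at this
    exact natDegree_le_of_degree_le (Order.le_of_lt_succ (by exact_mod_cast this))
  · rw [← Fin.sum_univ_eq_sum_range (fun r => M ^ (N - r) * scalar n (R.coeff r))]
    ext i j
    have := congrArg unop (congrFun₂ hg i j)
    simpa [Matrix.sum_apply, hcoeff, mul_diagonal] using this

theorem coeToPowerSeries_mapMatrix_of_X_mul_C (M : Matrix n n D) :
    coeToPowerSeries.ringHom.mapMatrix (of fun i j => X * C (M i j)) =
      of fun i j => PowerSeries.X * PowerSeries.C (M i j) := by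
  ext i j : 1
  simp only [RingHom.mapMatrix_apply, map_apply, of_apply, coeToPowerSeries.ringHom_apply,
    Polynomial.coe_mul, coe_X, coe_C]

theorem exists_ne_zero_mul_eq_coe (M : Matrix n n D) (S : Matrix n n (PowerSeries D))
    (hS : S * (1 - of fun i j => PowerSeries.X * PowerSeries.C (M i j)) = 1) :
    ∃ R : D[X], R ≠ 0 ∧
      ∃ Q : Matrix n n D[X], ∀ i j, S i j * (R : PowerSeries D) = Q i j := by
  obtain ⟨N, R, hR, hdeg, hrel⟩ := M.exists_sum_pow_mul_scalar_coeff_eq_zero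
  let ι : Matrix n n D[X] →+* Matrix n n (PowerSeries D) := coeToPowerSeries.ringHom.mapMatrix
  have hιX : ι (scalar n X) = scalar n PowerSeries.X := by
    rw [RingHom.mapMatrix_scalar, coeToPowerSeries.ringHom_apply, coe_X]
  have hx : ∀ a, Commute (ι (scalar n X)) a := fun a => by
    rw [hιX]
    exact scalar_commute _ (fun r => (PowerSeries.commute_X r).symm) a
  have hxm :
      ι (scalar n X) * ι (M.map C) = of fun i j => PowerSeries.X * PowerSeries.C (M i j) := by
    rw [hιX]
    ext i j : 1
    simp [ι]
  have hd :
      ∑ r ∈ range (N + 1), ι (M.map C) ^ (N - r) * ι (scalar n (C (R.coeff r))) = 0 := by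
    have : ∑ r ∈ range (N + 1), ι (M.map C) ^ (N - r) * ι (scalar n (C (R.coeff r))) =
        ι ((C : D →+* D[X]).mapMatrix
          (∑ r ∈ range (N + 1), M ^ (N - r) * scalar n (R.coeff r))) := by
      simp only [map_sum, map_mul, map_pow, RingHom.mapMatrix_scalar]
      rfl
    rw [this, hrel, map_zero, map_zero]
  have key := mul_sum_pow_mul_eq_of_mul_one_sub_eq_one hx (hxm ▸ hS) hd
  have hRsum : ∑ r ∈ range (N + 1), X ^ r * C (R.coeff r) = R := by
    conv_rhs => rw [as_sum_range' R (N + 1) (by omega)]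
    simp only [X_pow_mul_C, C_mul_X_pow_eq_monomial]
  simp only [← map_pow, ← map_mul, ← map_sum, hRsum] at key
  rw [RingHom.mapMatrix_scalar] at key
  obtain ⟨Q, hQ⟩ : ∃ Q, S * scalar n (R : PowerSeries D) = ι Q := ⟨_, key⟩
  refine ⟨R, hR, Q, fun i j => ?_⟩
  simpa [ι, mul_diagonal] using congrFun₂ hQ i j

theorem one_sub_mul_map_eval_one_eq_scalar (M : Matrix n n D) {S : Matrix n n (PowerSeries D)}
    (hS : (1 - of fun i j => PowerSeries.X * PowerSeries.C (M i j)) * S = 1)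
    {R : D[X]} {Q : Matrix n n D[X]} (hQ : ∀ i j, S i j * (R : PowerSeries D) = Q i j) :
    (1 - M) * Q.map (eval 1) = scalar n (R.eval 1) := by
  have hιQ : coeToPowerSeries.ringHom.mapMatrix Q = S * scalar n (R : PowerSeries D) := by
    ext i j : 1
    simp [mul_diagonal, hQ]
  have hpoly : (1 - of fun i j => X * C (M i j)) * Q = scalar n R := by
    have h : coeToPowerSeries.ringHom.mapMatrix ((1 - of fun i j => X * C (M i j)) * Q) =
        coeToPowerSeries.ringHom.mapMatrix (scalar n R) := by
      rw [map_mul, map_sub, map_one, coeToPowerSeries_mapMatrix_of_X_mul_C, hιQ, ← mul_assoc, hS,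
        one_mul, RingHom.mapMatrix_scalar, coeToPowerSeries.ringHom_apply]
    exact map_injective (coe_injective D) h
  have h := congrArg (evalOneRingHom D).mapMatrix hpoly
  have hT : (evalOneRingHom D).mapMatrix (of fun i j => X * C (M i j)) = M := by
    ext i j : 1
    simp
  rwa [map_mul, map_sub, map_one, hT, RingHom.mapMatrix_scalar, evalOneRingHom_apply] at h

theorem exists_eval_one_ne_zero_mul_eq_coe (M : Matrix n n D) {S : Matrix n n (PowerSeries D)}
    (hS : (1 - of fun i j => PowerSeries.X * PowerSeries.C (M i j)) * S = 1)
    (hM : IsUnit (1 - M)) {R : D[X]} (hR : R ≠ 0) {Q : Matrix n n D[X]}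
    (hQ : ∀ i j, S i j * (R : PowerSeries D) = Q i j) :
    ∃ (R' : D[X]) (Q' : Matrix n n D[X]), R'.eval 1 ≠ 0 ∧
      ∀ i j, S i j * (R' : PowerSeries D) = Q' i j := by
  induction hdeg : R.natDegree using Nat.strong_induction_on generalizing R Q with
  | _ d ih =>
  by_cases hR1 : R.eval 1 = 0
  swap
  · exact ⟨R, Q, hR1, hQ⟩
  obtain ⟨R', rfl⟩ := exists_eq_X_sub_one_mul hR1
  have hQ1 : Q.map (eval 1) = 0 := by
    have h := one_sub_mul_map_eval_one_eq_scalar M hS hQ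
    rwa [hR1, map_zero, hM.mul_right_eq_zero] at h
  choose Q' hQ' using fun i j => exists_eq_X_sub_one_mul (congrFun₂ hQ1 i j)
  have hR' : R' ≠ 0 := right_ne_zero_of_mul hR
  have hX1 : (X - 1 : D[X]) ≠ 0 := by simpa using X_sub_C_ne_zero (1 : D)
  have hcomm (f : PowerSeries D) : Commute f (X - 1 : D[X]) := by
    rw [← coeToPowerSeries.ringHom_apply, map_sub, map_one, coeToPowerSeries.ringHom_apply, coe_X]
    exact (PowerSeries.commute_X f).sub_right (Commute.one_right f)
  refine ih R'.natDegree ?_ hR' (Q := of Q') (fun i j => ?_) rfl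
  · rw [← hdeg, natDegree_mul hX1 hR', show (X - 1 : D[X]).natDegree = 1 by
      simpa using natDegree_X_sub_C (1 : D)]
    omega
  · have h := hQ i j
    rw [hQ' i j, Polynomial.coe_mul, Polynomial.coe_mul, ← mul_assoc, (hcomm _).eq,
      mul_assoc] at h
    exact mul_left_cancel₀ (coe_eq_zero_iff.not.mpr hX1) h

end

/-- Let `D` be a division ring, `t` a central variable and `M ∈ D^{k×k}`.
If `M` does not have eigenvalue 1 (no nonzero column vector `c` with `Mc = c`), then
`1 − M` is invertible over `D` and the matrix `(1 − tM)⁻¹` is evaluable at `t = 1`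
with value `(1 − M)⁻¹`. -/
theorem stmt19 {k : ℕ} {D : Type*} [DivisionRing D] (M : Matrix (Fin k) (Fin k) D)
    (hM : ∀ c : Fin k → D, M.mulVec c = c → c = 0)
    (S : Matrix (Fin k) (Fin k) (PowerSeries D))
    (hS1 : S * (1 - Matrix.of fun i j => PowerSeries.X * PowerSeries.C (M i j)) = 1)
    (hS2 : (1 - Matrix.of fun i j => PowerSeries.X * PowerSeries.C (M i j)) * S = 1) :
    IsUnit (1 - M) ∧ ∀ i j, EvalAtOne (S i j) (Ring.inverse (1 - M) i j) := by
  have hunit := isUnit_one_sub hM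
  obtain ⟨R₀, hR₀, Q₀, hQ₀⟩ := exists_ne_zero_mul_eq_coe M S hS1
  obtain ⟨R, Q, hR, hQ⟩ := exists_eval_one_ne_zero_mul_eq_coe M hS2 hunit hR₀ hQ₀
  have hval : Q.map (eval 1) = Ring.inverse (1 - M) * scalar (Fin k) (R.eval 1) := by
    rw [← one_sub_mul_map_eval_one_eq_scalar M hS2 hQ, ← mul_assoc,
      Ring.inverse_mul_cancel _ hunit, one_mul]
  refine ⟨hunit, fun i j => ⟨Q i j, R, hR, hQ i j, ?_⟩⟩
  have hij := congrFun₂ hval i j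
  rw [map_apply, scalar_apply, mul_diagonal] at hij
  rw [hij, mul_inv_cancel_right₀ hR]
end
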